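/- Let K be a field of characteristic not 2 containing a square root i of −1. Let a, b ∈ K be nonzero with a ≠ ±b and a ≠ ±ib. Consider the elliptic curve E: y² = (x−(a²−b²)²)(x−(a²+b²)²)x over K. Then every point of order 2 on E is divisible by 2 in E(K); in particular E(K) contains a subgroup isomorphic to ℤ/4ℤ ⊕ ℤ/4ℤ. -/

import Mathlib

/-- The elliptic curve `y² = (x − α₁)(x − α₂)(x − α₃)` as an affine Weierstrass curve. -/
def cubicCurve {K : Type*} [Field K] (α₁ α₂ α₃ : K) : WeierstrassCurve.Affine K :=
  { a₁ := 0, a₂ := -(α₁ + α₂ + α₃), a₃ := 0,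
    a₄ := α₁ * α₂ + α₂ * α₃ + α₃ * α₁, a₆ := -(α₁ * α₂ * α₃) }

/-!
A point `(α, 0)` of order two on `y² = (x - α)(x - β)(x - γ)` is twice a point as soon as
`α - β = u²` and `α - γ = v²`: then `(α + uv, (u + v)uv)` is such a half, the tangent line there
having slope `u + v`. For the curve of the theorem every difference of two of the roots
`(a² - b²)², (a² + b²)², 0` is a square (using `i`), so the whole two-torsion is divisible by two.
Halves `Q₁, Q₂` of two distinct points of order two have order four and generate `ℤ/4 × ℤ/4`.
-/

open WeierstrassCurve.Affine WeierstrassCurve.Affine.Point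

section CubicCurve

variable {K : Type*} [Field K]

lemma cubicCurve_swap (α β γ : K) : cubicCurve α β γ = cubicCurve β α γ := by
  ext <;> simp only [cubicCurve] <;> ring

lemma cubicCurve_rotate (α β γ : K) : cubicCurve α β γ = cubicCurve γ α β := by
  ext <;> simp only [cubicCurve] <;> ring

lemma cubicCurve_negY (α β γ x y : K) : (cubicCurve α β γ).negY x y = -y := by
  simp [negY, cubicCurve]

lemma cubicCurve_equation_iff {α β γ x y : K} :
    (cubicCurve α β γ).Equation x y ↔ y ^ 2 = (x - α) * (x - β) * (x - γ) := by
  rw [equation_iff]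
  simp only [cubicCurve]
  constructor <;> intro h <;> linear_combination h

variable {W : WeierstrassCurve.Affine K} {α β γ : K}

lemma nonsingular_root_iff (hW : W = cubicCurve α β γ) :
    W.Nonsingular α 0 ↔ α ≠ β ∧ α ≠ γ := by
  subst hW
  have hroot : (cubicCurve α β γ).Equation α 0 := cubicCurve_equation_iff.mpr (by ring)
  rw [nonsingular_iff, and_iff_right hroot]
  simp only [cubicCurve]
  rw [show 3 * α ^ 2 + 2 * -(α + β + γ) * α + (α * β + β * γ + γ * α) = (α - β) * (α - γ) by
    ring]
  simp [sub_eq_zero, eq_comm (a := (0 : K))]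

lemma cubicCurve_Y_ne_negY (h2 : (2 : K) ≠ 0) {x y : K} (hy : y ≠ 0) :
    y ≠ (cubicCurve α β γ).negY x y := by
  rw [cubicCurve_negY, ne_eq, eq_neg_iff_add_eq_zero, ← two_mul]
  exact mul_ne_zero h2 hy

variable [DecidableEq K]

lemma cubicCurve_two_nsmul_some_zero {x : K} (h : (cubicCurve α β γ).Nonsingular x 0) :
    2 • some _ _ h = 0 := by
  rw [two_nsmul]
  exact add_self_of_Y_eq (by rw [cubicCurve_negY, _root_.neg_zero])

lemma cubicCurve_Y_eq_zero_of_two_nsmul_some_eq_zero (h2 : (2 : K) ≠ 0) {x y : K}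
    {h : (cubicCurve α β γ).Nonsingular x y} (h0 : 2 • some _ _ h = 0) : y = 0 := by
  by_contra hy
  rw [two_nsmul, add_self_of_Y_ne (cubicCurve_Y_ne_negY h2 hy)] at h0
  exact some_ne_zero _ h0

lemma exists_two_nsmul_eq_root (hW : W = cubicCurve α β γ) (h2 : (2 : K) ≠ 0) {u v : K}
    (hu : u ^ 2 = α - β) (hv : v ^ 2 = α - γ) (huv : (u + v) * (u * v) ≠ 0)
    (h : W.Nonsingular α 0) : ∃ Q : W.Point, 2 • Q = some _ _ h := by
  obtain rfl : β = α - u ^ 2 := by linear_combination hu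
  obtain rfl : γ = α - v ^ 2 := by linear_combination hv
  have hQ : W.Equation (α + u * v) ((u + v) * (u * v)) :=
    hW ▸ cubicCurve_equation_iff.mpr (by ring)
  have hy : (u + v) * (u * v) ≠ W.negY (α + u * v) ((u + v) * (u * v)) :=
    hW ▸ cubicCurve_Y_ne_negY h2 huv
  have hslope :
      W.slope (α + u * v) (α + u * v) ((u + v) * (u * v)) ((u + v) * (u * v)) = u + v := by
    rw [slope_of_Y_ne rfl hy, div_eq_iff (sub_ne_zero.mpr hy)]
    simp only [hW, cubicCurve, negY]
    ring
  refine ⟨some _ _ ((nonsingular_iff _ _).mpr ⟨hQ, Or.inr hy⟩), ?_⟩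
  rw [two_nsmul, add_self_of_Y_ne hy, some.injEq, hslope]
  simp only [hW, addY, negAddY, addX, negY, cubicCurve]
  constructor <;> ring

lemma exists_two_nsmul_eq_root_of_isSquare (hW : W = cubicCurve α β γ) (h2 : (2 : K) ≠ 0)
    (hβ : IsSquare (α - β)) (hγ : IsSquare (α - γ)) (h : W.Nonsingular α 0) :
    ∃ Q : W.Point, 2 • Q = some _ _ h := by
  obtain ⟨u, hu⟩ := hβ
  obtain ⟨v, hv⟩ := hγ
  obtain ⟨hαβ, hαγ⟩ := (nonsingular_root_iff hW).mp h
  have hu0 : u ≠ 0 := by rintro rfl; exact hαβ (by simpa [sub_eq_zero] using hu)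
  have hv0 : v ≠ 0 := by rintro rfl; exact hαγ (by simpa [sub_eq_zero] using hv)
  -- `(u + v) * (u * v)` is the `y`-coordinate of the half, so `v` may have to become `-v`
  by_cases huv : u + v = 0
  · refine exists_two_nsmul_eq_root hW h2 (v := -v) (by rw [hu]; ring) (by rw [hv]; ring) ?_ h
    have : u + -v = 2 * u := by linear_combination -huv
    rw [this]
    exact mul_ne_zero (mul_ne_zero h2 hu0) (mul_ne_zero hu0 (neg_ne_zero.mpr hv0))
  · exact exists_two_nsmul_eq_root hW h2 (by rw [hu]; ring) (by rw [hv]; ring)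
      (mul_ne_zero huv (mul_ne_zero hu0 hv0)) h

lemma cubicCurve_exists_two_nsmul_eq_of_isSquare_sub (h2 : (2 : K) ≠ 0)
    (hαβ : IsSquare (α - β)) (hαγ : IsSquare (α - γ)) (hβα : IsSquare (β - α))
    (hβγ : IsSquare (β - γ)) (hγα : IsSquare (γ - α)) (hγβ : IsSquare (γ - β)) :
    ∀ P : (cubicCurve α β γ).Point, 2 • P = 0 → ∃ Q, 2 • Q = P := by
  rintro (_ | ⟨x, y, h⟩) hP
  · exact ⟨0, smul_zero 2⟩
  obtain rfl : y = 0 := cubicCurve_Y_eq_zero_of_two_nsmul_some_eq_zero h2 hP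
  have hx : (x - α) * (x - β) * (x - γ) = 0 :=
    (cubicCurve_equation_iff.mp h.1).symm.trans (by ring)
  rcases mul_eq_zero.mp hx with hx | hx
  · rcases mul_eq_zero.mp hx with hx | hx
    · obtain rfl := sub_eq_zero.mp hx
      exact exists_two_nsmul_eq_root_of_isSquare rfl h2 hαβ hαγ h
    · obtain rfl := sub_eq_zero.mp hx
      exact exists_two_nsmul_eq_root_of_isSquare (cubicCurve_swap α x γ) h2 hβα hβγ h
  · obtain rfl := sub_eq_zero.mp hx
    exact exists_two_nsmul_eq_root_of_isSquare (cubicCurve_rotate α β x) h2 hγα hγβ h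

lemma cubicCurve_sq_sq_zero_exists_two_nsmul_eq (h2 : (2 : K) ≠ 0) {i p q r : K}
    (hi : i ^ 2 = -1) (hr : q ^ 2 - p ^ 2 = r ^ 2) :
    ∀ P : (cubicCurve (p ^ 2) (q ^ 2) 0).Point, 2 • P = 0 → ∃ Q, 2 • Q = P := by
  have hneg (x : K) : IsSquare (-x ^ 2) := ⟨i * x, by linear_combination -x ^ 2 * hi⟩
  refine cubicCurve_exists_two_nsmul_eq_of_isSquare_sub h2 ?_ ⟨p, by ring⟩ ⟨r, by rw [hr, sq]⟩
    ⟨q, by ring⟩ ?_ ?_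
  · rw [← neg_sub, hr]
    exact hneg r
  · rw [zero_sub]
    exact hneg p
  · rw [zero_sub]
    exact hneg q

end CubicCurve

lemma exists_injective_zmod_four_prod {G : Type*} [AddCommGroup G] {Q₁ Q₂ : G}
    (h₁ : 4 • Q₁ = 0) (h₂ : 4 • Q₂ = 0) (h₁' : 2 • Q₁ ≠ 0) (h₂' : 2 • Q₂ ≠ 0)
    (h₁₂ : 2 • Q₁ + 2 • Q₂ ≠ 0) : ∃ φ : ZMod 4 × ZMod 4 →+ G, Function.Injective φ := by
  have hlift {Q : G} (h : 4 • Q = 0) : zmultiplesHom G Q 4 = 0 := by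
    rw [zmultiplesHom_apply]
    exact_mod_cast h
  let φ₁ : ZMod 4 →+ G := ZMod.lift 4 ⟨zmultiplesHom G Q₁, hlift h₁⟩
  let φ₂ : ZMod 4 →+ G := ZMod.lift 4 ⟨zmultiplesHom G Q₂, hlift h₂⟩
  have hφ₁ : φ₁ 1 = Q₁ := (ZMod.lift_coe 4 _ 1).trans (one_zsmul Q₁)
  have hφ₂ : φ₂ 1 = Q₂ := (ZMod.lift_coe 4 _ 1).trans (one_zsmul Q₂)
  let S : Finset (ZMod 4 × ZMod 4) := {2 • (1, 0), 2 • (0, 1), 2 • (1, 1)}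
  have hS : ∀ s ∈ S, φ₁.coprod φ₂ s ≠ 0 := by
    simp only [S, Finset.mem_insert, Finset.mem_singleton, forall_eq_or_imp, forall_eq,
      map_nsmul (φ₁.coprod φ₂)]
    simp only [AddMonoidHom.coprod_apply, _root_.map_zero, hφ₁, hφ₂, add_zero, zero_add]
    exact ⟨h₁', h₂', by rwa [smul_add]⟩
  -- a nonzero element of `(ℤ/4)²` is of order two or has a double of order two
  have hcases : ∀ x : ZMod 4 × ZMod 4, x = 0 ∨ x ∈ S ∨ 2 • x ∈ S := by decide
  refine ⟨φ₁.coprod φ₂, (injective_iff_map_eq_zero _).mpr fun x hx => ?_⟩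
  rcases hcases x with h0 | hx' | hx'
  · exact h0
  · exact absurd hx (hS x hx')
  · exact absurd (by rw [map_nsmul, hx, smul_zero]) (hS _ hx')

lemma cubicCurve_exists_injective_zmod_four_prod {K : Type*} [Field K] [DecidableEq K]
    {α β γ : K} (hαβ : α ≠ β) (hαγ : α ≠ γ) (hβγ : β ≠ γ)
    (hdiv : ∀ P : (cubicCurve α β γ).Point, 2 • P = 0 → ∃ Q, 2 • Q = P) :
    ∃ φ : ZMod 4 × ZMod 4 →+ (cubicCurve α β γ).Point, Function.Injective φ := by
  have hα := (nonsingular_root_iff rfl).mpr ⟨hαβ, hαγ⟩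
  have hβ := (nonsingular_root_iff (cubicCurve_swap α β γ)).mpr ⟨hαβ.symm, hβγ⟩
  obtain ⟨Q₁, hQ₁⟩ := hdiv _ (cubicCurve_two_nsmul_some_zero hα)
  obtain ⟨Q₂, hQ₂⟩ := hdiv _ (cubicCurve_two_nsmul_some_zero hβ)
  refine exists_injective_zmod_four_prod ?_ ?_ (hQ₁ ▸ some_ne_zero _) (hQ₂ ▸ some_ne_zero _) ?_
  · rw [show 4 = 2 * 2 from rfl, mul_nsmul, hQ₁, cubicCurve_two_nsmul_some_zero]
  · rw [show 4 = 2 * 2 from rfl, mul_nsmul, hQ₂, cubicCurve_two_nsmul_some_zero]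
  · rw [hQ₁, hQ₂, add_of_X_ne hαβ]
    exact some_ne_zero _

open Classical in
theorem full_four_torsion {K : Type*} [Field K] (h2 : (2 : K) ≠ 0)
    (i a b : K) (hi : i ^ 2 = -1) (ha : a ≠ 0) (hb : b ≠ 0)
    (hab : a ≠ b) (hab' : a ≠ -b) (haib : a ≠ i * b) (haib' : a ≠ -(i * b)) :
    (∀ P : (cubicCurve ((a ^ 2 - b ^ 2) ^ 2) ((a ^ 2 + b ^ 2) ^ 2) 0).Point,
        addOrderOf P = 2 →
        ∃ Q : (cubicCurve ((a ^ 2 - b ^ 2) ^ 2) ((a ^ 2 + b ^ 2) ^ 2) 0).Point,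
          2 • Q = P) ∧
      ∃ φ : (ZMod 4 × ZMod 4) →+
          (cubicCurve ((a ^ 2 - b ^ 2) ^ 2) ((a ^ 2 + b ^ 2) ^ 2) 0).Point,
        Function.Injective φ := by
  have hdiv := cubicCurve_sq_sq_zero_exists_two_nsmul_eq h2 hi
    (show (a ^ 2 + b ^ 2) ^ 2 - (a ^ 2 - b ^ 2) ^ 2 = (2 * a * b) ^ 2 by ring)
  have hdiff : a ^ 2 - b ^ 2 ≠ 0 := by
    rw [sub_ne_zero, Ne, sq_eq_sq_iff_eq_or_eq_neg]
    tauto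
  have hsum : a ^ 2 + b ^ 2 ≠ 0 := by
    rw [show a ^ 2 + b ^ 2 = a ^ 2 - (i * b) ^ 2 by linear_combination b ^ 2 * hi, sub_ne_zero,
      Ne, sq_eq_sq_iff_eq_or_eq_neg]
    tauto
  have hroots : (a ^ 2 - b ^ 2) ^ 2 ≠ (a ^ 2 + b ^ 2) ^ 2 := fun h =>
    pow_ne_zero 2 (mul_ne_zero (mul_ne_zero h2 ha) hb) (by linear_combination -h)
  exact ⟨fun P hP => hdiv P (addOrderOf_dvd_iff_nsmul_eq_zero.mp hP.dvd),
    cubicCurve_exists_injective_zmod_four_prod hroots (pow_ne_zero 2 hdiff) (pow_ne_zero 2 hsum)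
      hdiv⟩
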